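/- Let (X,d) be a complete, simply-connected metric space equipped with a convex local geodesic bicombing σ that is reversible, and let d̄ denote the induced length metric on X. Then the unique convex geodesic bicombing σ̃ on (X,d̄) that is consistent with σ is reversible, i.e. σ̃_{yx}(t) = σ̃_{xy}(1−t) for all x,y ∈ X and t ∈ [0,1]. -/

import Mathlib

open Set Metric

/-- `c : [0,1] → X` is a geodesic: `d(c s, c t) = |s - t| ⬝ d(c 0, c 1)` for `s, t ∈ [0,1]`. -/
def IsGeodesicSegment {X : Type*} [MetricSpace X] (c : ℝ → X) : Prop :=
  ∀ s ∈ Icc (0:ℝ) 1, ∀ t ∈ Icc (0:ℝ) 1,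
    dist (c s) (c t) = |s - t| * dist (c 0) (c 1)

/-- A local geodesic bicombing on a metric space `X`: an assignment `x ↦ r x > 0` and a
selection `σ y z` of geodesics from `y` to `z` for pairs `y, z` lying in a common ball
`U(x, r x)`, staying in that ball, and consistent with taking subsegments. -/
structure LocalGeodesicBicombing (X : Type*) [MetricSpace X] where
  r : X → ℝ
  r_pos : ∀ x, 0 < r x
  σ : X → X → ℝ → X
  source : ∀ x y z, y ∈ ball x (r x) → z ∈ ball x (r x) → σ y z 0 = y
  target : ∀ x y z, y ∈ ball x (r x) → z ∈ ball x (r x) → σ y z 1 = z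
  geodesic : ∀ x y z, y ∈ ball x (r x) → z ∈ ball x (r x) →
    ∀ s ∈ Icc (0:ℝ) 1, ∀ t ∈ Icc (0:ℝ) 1, dist (σ y z s) (σ y z t) = |s - t| * dist y z
  mem_ball : ∀ x y z, y ∈ ball x (r x) → z ∈ ball x (r x) →
    ∀ t ∈ Icc (0:ℝ) 1, σ y z t ∈ ball x (r x)
  consistent : ∀ x y z, y ∈ ball x (r x) → z ∈ ball x (r x) →
    ∀ a b, 0 ≤ a → a ≤ b → b ≤ 1 → ∀ t ∈ Icc (0:ℝ) 1,
      σ (σ y z a) (σ y z b) t = σ y z ((1 - t) * a + t * b)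

namespace LocalGeodesicBicombing

variable {X : Type*} [MetricSpace X]

/-- The domain `U` of the local bicombing: pairs of points lying in a common ball `U(x, r x)`. -/
def InDom (L : LocalGeodesicBicombing X) (y z : X) : Prop :=
  ∃ x, y ∈ ball x (L.r x) ∧ z ∈ ball x (L.r x)

/-- A local geodesic bicombing is convex if it is locally convex. -/
def IsConvex (L : LocalGeodesicBicombing X) : Prop :=
  ∀ x, ∀ y ∈ ball x (L.r x), ∀ z ∈ ball x (L.r x), ∀ y' ∈ ball x (L.r x), ∀ z' ∈ ball x (L.r x),
    ConvexOn ℝ (Icc (0:ℝ) 1) (fun t => dist (L.σ y z t) (L.σ y' z' t))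

/-- A local geodesic bicombing is reversible if `σ z y (t) = σ y z (1 - t)` on its domain. -/
def IsReversible (L : LocalGeodesicBicombing X) : Prop :=
  ∀ y z, L.InDom y z → ∀ t ∈ Icc (0:ℝ) 1, L.σ z y t = L.σ y z (1 - t)

end LocalGeodesicBicombing

/-- The length `L(γ)` of a curve `γ : [0,1] → X` (as a real number; the supremum over
partitions of `[0,1]` of the sums of consecutive distances). -/
noncomputable def curveLength {X : Type*} [MetricSpace X] (γ : ℝ → X) : ℝ :=
  (eVariationOn γ (Icc (0:ℝ) 1)).toReal

/-- `c : [0,1] → X` is a local geodesic: every `t ∈ [0,1]` has a neighborhood in `[0,1]` on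
which `d(c s, c s') = |s - s'| ⬝ L(c)`. -/
def IsLocalGeodesic {X : Type*} [MetricSpace X] (c : ℝ → X) : Prop :=
  ∀ t ∈ Icc (0:ℝ) 1, ∃ ε > (0:ℝ),
    ∀ s ∈ Icc (0:ℝ) 1 ∩ Ioo (t - ε) (t + ε), ∀ s' ∈ Icc (0:ℝ) 1 ∩ Ioo (t - ε) (t + ε),
      dist (c s) (c s') = |s - s'| * curveLength c

/-- A curve `c : [0,1] → X` is consistent with the local geodesic bicombing `L` if
`c ((1-t)a + tb) = σ (c a) (c b) t` whenever `0 ≤ a ≤ b ≤ 1` and `(c a, c b)` is in the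
domain of `L`. -/
def LocalGeodesicBicombing.ConsistentWith {X : Type*} [MetricSpace X]
    (L : LocalGeodesicBicombing X) (c : ℝ → X) : Prop :=
  ∀ a b, 0 ≤ a → a ≤ b → b ≤ 1 → L.InDom (c a) (c b) →
    ∀ t ∈ Icc (0:ℝ) 1, c ((1 - t) * a + t * b) = L.σ (c a) (c b) t

/-- The induced length metric `d̄(x,y)`: the infimum of lengths of continuous curves from
`x` to `y`. -/
noncomputable def lengthMetric {X : Type*} [MetricSpace X] (x y : X) : ℝ :=
  (⨅ (γ : ℝ → X) (_ : ContinuousOn γ (Icc (0:ℝ) 1)) (_ : γ 0 = x) (_ : γ 1 = y),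
    eVariationOn γ (Icc (0:ℝ) 1)).toReal

/-- `σ'` is a convex geodesic bicombing on `(X, d̄)` (where `d̄` is the induced length metric)
which is consistent with the local geodesic bicombing `L` on `(X, d)`: each `σ' x y` is a
geodesic from `x` to `y` with respect to `d̄`, the selection is consistent with taking
subsegments, the function `t ↦ d̄(σ' x y t, σ' x' y' t)` is convex on `[0,1]`, and each
`σ' x y`, viewed as a map into `(X, d)`, is a local geodesic consistent with `L`. -/
structure IsConsistentConvexBicombing {X : Type*} [MetricSpace X]
    (L : LocalGeodesicBicombing X) (σ' : X → X → ℝ → X) : Prop where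
  source : ∀ x y, σ' x y 0 = x
  target : ∀ x y, σ' x y 1 = y
  geodesic : ∀ x y, ∀ s ∈ Icc (0:ℝ) 1, ∀ t ∈ Icc (0:ℝ) 1,
    lengthMetric (σ' x y s) (σ' x y t) = |s - t| * lengthMetric x y
  consistent : ∀ x y a b, 0 ≤ a → a ≤ b → b ≤ 1 → ∀ t ∈ Icc (0:ℝ) 1,
    σ' (σ' x y a) (σ' x y b) t = σ' x y ((1 - t) * a + t * b)
  convex : ∀ x y x' y', ConvexOn ℝ (Icc (0:ℝ) 1)
    (fun t => lengthMetric (σ' x y t) (σ' x' y' t))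
  localGeodesic : ∀ x y, IsLocalGeodesic (σ' x y)
  consistentWith : ∀ x y, L.ConsistentWith (σ' x y)

/-!
For fixed `x, y` the function `u ↦ d̄(σ̃_yx(u), σ̃_xy(1 - u))` vanishes at `u = 0` and `u = 1`.
Near any `u`, the points `σ̃_xy(1 - ·)` stay in one ball of the local bicombing, where `σ̃` agrees
with the reversible `σ`; there `σ̃_xy(1 - ·)` is a subsegment of `σ̃` run forwards, so after an
affine change of parameter the function is one of the convex functions
`t ↦ d̄(σ̃_pq(t), σ̃_p'q'(t))`. A locally convex function on an interval is convex, so the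
function vanishes identically, and `d̄` separates the endpoints of a rectifiable curve such as a
local geodesic.
-/

private lemma le_slope_of_le_slope_of_le_slope {f : ℝ → ℝ} {x y z A : ℝ} (hxy : x < y)
    (hyz : y < z) (h₁ : A ≤ (f y - f x) / (y - x)) (h₂ : A ≤ (f z - f y) / (z - y)) :
    A ≤ (f z - f x) / (z - x) := by
  rw [le_div_iff₀ (by linarith)] at h₁ h₂ ⊢
  linarith

private lemma slope_le_of_slope_le_of_slope_le {f : ℝ → ℝ} {x y z B : ℝ} (hxy : x < y)
    (hyz : y < z) (h₁ : (f y - f x) / (y - x) ≤ B) (h₂ : (f z - f y) / (z - y) ≤ B) :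
    (f z - f x) / (z - x) ≤ B := by
  rw [div_le_iff₀ (by linarith)] at h₁ h₂ ⊢
  linarith

theorem ConvexOn.Icc_union_Icc {f : ℝ → ℝ} {a b c d : ℝ} (hf : ConvexOn ℝ (Icc a c) f)
    (hg : ConvexOn ℝ (Icc b d) f) (hbc : b < c) (hcd : c ≤ d) : ConvexOn ℝ (Icc a d) f := by
  rcases lt_or_ge b a with hba | hab
  · exact hg.subset (Icc_subset_Icc_left hba.le) (convex_Icc a d)
  refine convexOn_iff_slope_mono_adjacent.2 ⟨convex_Icc a d, fun {x y z} hx hz hxy hyz => ?_⟩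
  rcases le_or_gt z c with hzc | hcz
  · exact hf.slope_mono_adjacent ⟨hx.1, by linarith⟩ ⟨by linarith [hx.1], hzc⟩ hxy hyz
  rcases le_or_gt b x with hbx | hxb
  · exact hg.slope_mono_adjacent ⟨hbx, by linarith [hz.2]⟩ ⟨by linarith, hz.2⟩ hxy hyz
  rcases lt_or_ge y c with hyc | hcy
  · -- `x < y < m < n < z` with `m, n` in the overlap
    obtain ⟨m, hm, hmc⟩ := exists_between (max_lt hbc hyc)
    obtain ⟨hbm, hym⟩ := max_lt_iff.1 hm
    obtain ⟨n, hmn, hnc⟩ := exists_between hmc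
    have h₁ : (f y - f x) / (y - x) ≤ (f m - f y) / (m - y) :=
      hf.slope_mono_adjacent ⟨hx.1, by linarith⟩ ⟨by linarith [hx.1], hmc.le⟩ hxy hym
    have h₂ : (f m - f y) / (m - y) ≤ (f n - f m) / (n - m) :=
      hf.slope_mono_adjacent ⟨by linarith [hx.1], by linarith⟩ ⟨by linarith [hx.1], hnc.le⟩ hym hmn
    have h₃ : (f n - f m) / (n - m) ≤ (f z - f n) / (z - n) :=
      hg.slope_mono_adjacent ⟨hbm.le, by linarith⟩ ⟨by linarith, hz.2⟩ hmn (by linarith)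
    exact le_slope_of_le_slope_of_le_slope hym (by linarith) h₁
      (le_slope_of_le_slope_of_le_slope hmn (by linarith) (h₁.trans h₂) (h₁.trans (h₂.trans h₃)))
  · -- `x < m < n < y < z` with `m, n` in the overlap
    obtain ⟨m, hbm, hmc⟩ := exists_between hbc
    obtain ⟨n, hmn, hnc⟩ := exists_between hmc
    have h₁ : (f y - f n) / (y - n) ≤ (f z - f y) / (z - y) :=
      hg.slope_mono_adjacent ⟨by linarith, by linarith⟩ ⟨by linarith, hz.2⟩ (by linarith) hyz
    have h₂ : (f n - f m) / (n - m) ≤ (f y - f n) / (y - n) :=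
      hg.slope_mono_adjacent ⟨hbm.le, by linarith⟩ ⟨by linarith, by linarith [hz.2]⟩ hmn
        (by linarith)
    have h₃ : (f m - f x) / (m - x) ≤ (f n - f m) / (n - m) :=
      hf.slope_mono_adjacent ⟨hx.1, by linarith⟩ ⟨by linarith [hx.1], hnc.le⟩ (by linarith) hmn
    exact slope_le_of_slope_le_of_slope_le (by linarith : x < n) (by linarith)
      (slope_le_of_slope_le_of_slope_le (by linarith) hmn (h₃.trans (h₂.trans h₁)) (h₂.trans h₁)) h₁

theorem convexOn_Icc_of_forall_exists_convexOn {f : ℝ → ℝ} {a b : ℝ}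
    (h : ∀ t ∈ Icc a b, ∃ δ > 0, ConvexOn ℝ (Icc a b ∩ Icc (t - δ) (t + δ)) f) :
    ConvexOn ℝ (Icc a b) f := by
  rcases lt_or_ge b a with hba | hab
  · rw [Icc_eq_empty_of_lt hba]
    exact ⟨convex_empty, fun x hx => hx.elim⟩
  set S := {u ∈ Icc a b | ConvexOn ℝ (Icc a u) f}
  have haS : a ∈ S := by
    refine ⟨left_mem_Icc.2 hab, ?_⟩
    rw [Icc_self]
    exact ⟨convex_singleton a, by
      rintro x rfl y rfl p q - - hpq
      rw [Convex.combo_self hpq, Convex.combo_self hpq]⟩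
  have hS : BddAbove S := ⟨b, fun u hu => hu.1.2⟩
  set T := sSup S
  have hT : T ∈ Icc a b := ⟨le_csSup hS haS, csSup_le ⟨a, haS⟩ fun u hu => hu.1.2⟩
  obtain ⟨δ, hδ, hconv⟩ := h T hT
  rw [Icc_inter_Icc] at hconv
  -- the window around the supremum extends the convexity beyond it
  have hqS : b ⊓ (T + δ) ∈ S := by
    refine ⟨⟨le_inf hab (by linarith [hT.1]), inf_le_left⟩, ?_⟩
    rcases le_or_gt (T - δ) a with hTa | hTa
    · rwa [sup_eq_left.2 hTa] at hconv
    obtain ⟨u, huS, hu⟩ := exists_lt_of_lt_csSup ⟨a, haS⟩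
      (show a ⊔ (T - δ) < T from sup_lt_iff.2 ⟨hTa.trans (by linarith), by linarith⟩)
    exact huS.2.Icc_union_Icc hconv hu (le_inf huS.1.2 (by linarith [le_csSup hS huS]))
  have hbT : b ≤ T + δ := by
    by_contra! hlt
    have := le_csSup hS hqS
    rw [inf_eq_right.2 hlt.le] at this
    linarith
  rw [inf_eq_left.2 hbT] at hqS
  exact hqS.2

theorem ConvexOn.of_comp_lineMap {f : ℝ → ℝ} {a b : ℝ} (hab : a < b)
    (hf : ConvexOn ℝ (Icc 0 1) (f ∘ (AffineMap.lineMap a b : ℝ →ᵃ[ℝ] ℝ))) :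
    ConvexOn ℝ (Icc a b) f := by
  have hba : b - a ≠ 0 := sub_ne_zero.2 hab.ne'
  set φ : ℝ →ᵃ[ℝ] ℝ := AffineMap.lineMap (-a / (b - a)) ((1 - a) / (b - a))
  have hφ : ∀ u, φ u = (u - a) / (b - a) := fun u => by
    simp only [φ, AffineMap.lineMap_apply_ring']
    field_simp
    ring
  refine ((hf.comp_affineMap φ).subset (fun u hu => ?_) (convex_Icc a b)).congr fun u _ => ?_
  · rw [mem_preimage, hφ]
    exact ⟨div_nonneg (by linarith [hu.1]) (by linarith),
      (div_le_one (by linarith)).2 (by linarith [hu.2])⟩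
  · simp only [Function.comp_apply, hφ, AffineMap.lineMap_apply_ring']
    field_simp
    rw [sub_add_cancel]

theorem IsLocalGeodesic.continuousOn {X : Type*} [MetricSpace X] {c : ℝ → X}
    (hc : IsLocalGeodesic c) : ContinuousOn c (Icc 0 1) := by
  intro t ht
  obtain ⟨ε, hε, hloc⟩ := hc t ht
  have hnear : ∀ᶠ s in nhdsWithin t (Icc 0 1), s ∈ Icc 0 1 ∩ Ioo (t - ε) (t + ε) :=
    inter_mem_nhdsWithin _ (Ioo_mem_nhds (by linarith) (by linarith))
  have htmem : t ∈ Icc 0 1 ∩ Ioo (t - ε) (t + ε) := ⟨ht, by linarith, by linarith⟩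
  rw [ContinuousWithinAt, tendsto_iff_dist_tendsto_zero]
  refine squeeze_zero' (Filter.Eventually.of_forall fun _ => dist_nonneg)
    (hnear.mono fun s hs => (hloc s hs t htmem).le) (tendsto_nhdsWithin_of_tendsto_nhds ?_)
  simpa using ((continuous_id.sub continuous_const).abs.mul continuous_const).tendsto t
    (f := fun s : ℝ => |s - t| * curveLength c)

theorem IsLocalGeodesic.eVariationOn_ne_top {X : Type*} [MetricSpace X] {c : ℝ → X}
    (hc : IsLocalGeodesic c) : eVariationOn c (Icc 0 1) ≠ ⊤ := by
  intro htop
  have hlen : curveLength c = 0 := by rw [curveLength, htop, ENNReal.toReal_top]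
  -- `curveLength c` is then the junk value `0`, so `c` is locally, hence globally, constant
  have hlc : IsLocallyConstant fun s : Icc (0:ℝ) 1 => c s := by
    refine (IsLocallyConstant.iff_eventually_eq _).2 fun t => ?_
    obtain ⟨ε, hε, hloc⟩ := hc t t.2
    refine (eventually_nhds_subtype_iff _ t fun s => c s = c t).2 ?_
    filter_upwards [inter_mem_nhdsWithin (Icc 0 1) (Ioo_mem_nhds (by linarith : (t:ℝ) - ε < t)
      (by linarith : (t:ℝ) < t + ε))] with s hs
    rw [← dist_eq_zero, hloc s hs t ⟨t.2, by linarith, by linarith⟩, hlen, mul_zero]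
  have : PreconnectedSpace (Icc (0:ℝ) 1) := Subtype.preconnectedSpace isPreconnected_Icc
  rw [eVariationOn.constant_on (by
    rintro _ ⟨s, hs, rfl⟩ _ ⟨s', hs', rfl⟩
    exact hlc.apply_eq_of_preconnectedSpace ⟨s, hs⟩ ⟨s', hs'⟩)] at htop
  exact ENNReal.zero_ne_top htop

theorem lengthMetric_nonneg {X : Type*} [MetricSpace X] (p q : X) : 0 ≤ lengthMetric p q :=
  ENNReal.toReal_nonneg

private lemma iInf_eVariationOn_le {X : Type*} [MetricSpace X] {γ : ℝ → X}
    (hγ : ContinuousOn γ (Icc 0 1)) :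
    (⨅ (γ' : ℝ → X) (_ : ContinuousOn γ' (Icc (0:ℝ) 1)) (_ : γ' 0 = γ 0) (_ : γ' 1 = γ 1),
      eVariationOn γ' (Icc (0:ℝ) 1)) ≤ eVariationOn γ (Icc 0 1) :=
  iInf_le_of_le γ <| iInf_le_of_le hγ <| iInf_le_of_le rfl <| iInf_le_of_le rfl le_rfl

theorem lengthMetric_self {X : Type*} [MetricSpace X] (p : X) : lengthMetric p p = 0 := by
  have hconst : eVariationOn (fun _ : ℝ => p) (Icc 0 1) = 0 :=
    eVariationOn.constant_on (subsingleton_singleton.anti (image_subset_iff.2 fun _ _ => rfl))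
  exact (ENNReal.toReal_eq_zero_iff _).2 <| Or.inl <| nonpos_iff_eq_zero.1 <|
    (iInf_eVariationOn_le continuousOn_const).trans_eq hconst

theorem eq_of_lengthMetric_eq_zero {X : Type*} [MetricSpace X] {γ : ℝ → X}
    (hγ : ContinuousOn γ (Icc 0 1)) (hfin : eVariationOn γ (Icc 0 1) ≠ ⊤)
    (h : lengthMetric (γ 0) (γ 1) = 0) : γ 0 = γ 1 := by
  rw [lengthMetric, ENNReal.toReal_eq_zero_iff] at h
  have hinf := h.resolve_right (ne_top_of_le_ne_top hfin (iInf_eVariationOn_le hγ))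
  refine edist_le_zero.1 (hinf ▸ le_iInf fun γ' => le_iInf fun _ => le_iInf fun h₀ =>
    le_iInf fun h₁ => ?_)
  rw [← h₀, ← h₁]
  exact eVariationOn.edist_le γ' (left_mem_Icc.2 zero_le_one) (right_mem_Icc.2 zero_le_one)

theorem LocalGeodesicBicombing.InDom.symm {X : Type*} [MetricSpace X]
    {L : LocalGeodesicBicombing X} {y z : X} (h : L.InDom y z) : L.InDom z y :=
  let ⟨x, hy, hz⟩ := h
  ⟨x, hz, hy⟩

namespace IsConsistentConvexBicombing

variable {X : Type*} [MetricSpace X] {L : LocalGeodesicBicombing X} {σ' : X → X → ℝ → X}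

theorem eq_of_inDom (h : IsConsistentConvexBicombing L σ') {y z : X} (hyz : L.InDom y z)
    {s : ℝ} (hs : s ∈ Icc (0:ℝ) 1) : σ' y z s = L.σ y z s := by
  have := h.consistentWith y z 0 1 le_rfl zero_le_one le_rfl (by rwa [h.source, h.target]) s hs
  rwa [h.source, h.target, mul_zero, mul_one, zero_add] at this

theorem apply_symm_of_inDom (h : IsConsistentConvexBicombing L σ') (hrev : L.IsReversible)
    {y z : X} (hyz : L.InDom y z) {s : ℝ} (hs : s ∈ Icc (0:ℝ) 1) :
    σ' z y s = σ' y z (1 - s) := by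
  rw [h.eq_of_inDom hyz.symm hs, hrev y z hyz s hs,
    h.eq_of_inDom hyz ⟨by linarith [hs.2], by linarith [hs.1]⟩]

theorem eq_of_lengthMetric_eq_zero (h : IsConsistentConvexBicombing L σ') {y z : X}
    (hyz : lengthMetric y z = 0) : y = z := by
  have hc := h.localGeodesic y z
  have := _root_.eq_of_lengthMetric_eq_zero hc.continuousOn hc.eVariationOn_ne_top
    (by rwa [h.source, h.target])
  rwa [h.source, h.target] at this

theorem convexOn_comp_lineMap_of_inDom (h : IsConsistentConvexBicombing L σ')
    (hrev : L.IsReversible) (x y : X) {a b : ℝ} (ha : 0 ≤ a) (hab : a ≤ b) (hb : b ≤ 1)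
    (hdom : L.InDom (σ' x y (1 - a)) (σ' x y (1 - b))) :
    ConvexOn ℝ (Icc 0 1) ((fun u => lengthMetric (σ' y x u) (σ' x y (1 - u))) ∘
      (AffineMap.lineMap a b : ℝ →ᵃ[ℝ] ℝ)) := by
  refine (h.convex (σ' y x a) (σ' y x b) (σ' x y (1 - a)) (σ' x y (1 - b))).congr fun τ hτ => ?_
  have h1τ : 1 - τ ∈ Icc (0:ℝ) 1 := ⟨by linarith [hτ.2], by linarith [hτ.1]⟩
  have hfwd : σ' (σ' y x a) (σ' y x b) τ = σ' y x (AffineMap.lineMap a b τ) := by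
    rw [h.consistent y x a b ha hab hb τ hτ, AffineMap.lineMap_apply_ring]
  have hbwd : σ' (σ' x y (1 - a)) (σ' x y (1 - b)) τ = σ' x y (1 - AffineMap.lineMap a b τ) := by
    have hrev' := h.apply_symm_of_inDom hrev hdom h1τ
    rw [sub_sub_cancel] at hrev'
    rw [← hrev', h.consistent x y (1 - b) (1 - a) (by linarith) (by linarith) (by linarith) _ h1τ,
      AffineMap.lineMap_apply_ring]
    ring_nf
  simp only [Function.comp_apply, hfwd, hbwd]

theorem exists_convexOn_lengthMetric_reverse_near (h : IsConsistentConvexBicombing L σ')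
    (hrev : L.IsReversible) (x y : X) {t₀ : ℝ} (ht₀ : t₀ ∈ Icc (0:ℝ) 1) :
    ∃ δ > 0, ConvexOn ℝ (Icc 0 1 ∩ Icc (t₀ - δ) (t₀ + δ))
      fun u => lengthMetric (σ' y x u) (σ' x y (1 - u)) := by
  set p := σ' x y (1 - t₀)
  have hs₀ : 1 - t₀ ∈ Icc (0:ℝ) 1 := ⟨by linarith [ht₀.2], by linarith [ht₀.1]⟩
  obtain ⟨ε, hε, hball⟩ := Metric.continuousWithinAt_iff.1
    ((h.localGeodesic x y).continuousOn _ hs₀) _ (L.r_pos p)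
  have hnear : ∀ u ∈ Icc (0:ℝ) 1 ∩ Icc (t₀ - ε / 2) (t₀ + ε / 2),
      σ' x y (1 - u) ∈ ball p (L.r p) := fun u hu =>
    hball ⟨by linarith [hu.1.2], by linarith [hu.1.1]⟩
      (by rw [Real.dist_eq, abs_lt]; constructor <;> linarith [hu.2.1, hu.2.2])
  refine ⟨ε / 2, half_pos hε, ?_⟩
  rw [Icc_inter_Icc] at hnear ⊢
  have hab : 0 ⊔ (t₀ - ε / 2) < 1 ⊓ (t₀ + ε / 2) :=
    sup_lt_iff.2 ⟨lt_inf_iff.2 ⟨one_pos, by linarith [ht₀.1]⟩,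
      lt_inf_iff.2 ⟨by linarith [ht₀.2], by linarith⟩⟩
  exact ConvexOn.of_comp_lineMap hab <| h.convexOn_comp_lineMap_of_inDom hrev x y le_sup_left
    hab.le inf_le_left ⟨p, hnear _ (left_mem_Icc.2 hab.le), hnear _ (right_mem_Icc.2 hab.le)⟩

theorem convexOn_lengthMetric_reverse (h : IsConsistentConvexBicombing L σ')
    (hrev : L.IsReversible) (x y : X) :
    ConvexOn ℝ (Icc 0 1) fun u => lengthMetric (σ' y x u) (σ' x y (1 - u)) :=
  convexOn_Icc_of_forall_exists_convexOn fun _ ht₀ =>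
    h.exists_convexOn_lengthMetric_reverse_near hrev x y ht₀

end IsConsistentConvexBicombing

theorem reversible_consistent_convex_bicombing_general
    {X : Type*} [MetricSpace X]
    (L : LocalGeodesicBicombing X) (hrev : L.IsReversible)
    (σ' : X → X → ℝ → X) (h' : IsConsistentConvexBicombing L σ') :
    ∀ x y : X, ∀ t ∈ Icc (0:ℝ) 1, σ' y x t = σ' x y (1 - t) := by
  intro x y t ht
  have hle := (h'.convexOn_lengthMetric_reverse hrev x y).le_on_segment
    (left_mem_Icc.2 zero_le_one) (right_mem_Icc.2 zero_le_one)
    (by rwa [segment_eq_Icc zero_le_one])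
  simp only [sub_zero, sub_self, h'.source, h'.target, lengthMetric_self, max_self] at hle
  exact h'.eq_of_lengthMetric_eq_zero (le_antisymm hle (lengthMetric_nonneg _ _))

/-- **Cartan–Hadamard theorem for convex bicombings (reversibility).**
If the convex local geodesic bicombing `σ` on a complete, simply-connected metric space is
reversible, then the (unique) convex geodesic bicombing on the induced length metric which
is consistent with `σ` is reversible as well: `σ̃ y x (t) = σ̃ x y (1 - t)`. -/
theorem reversible_consistent_convex_bicombing
    {X : Type*} [MetricSpace X] [CompleteSpace X] [SimplyConnectedSpace X]
    (L : LocalGeodesicBicombing X) (hL : L.IsConvex) (hrev : L.IsReversible)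
    (σ' : X → X → ℝ → X) (h' : IsConsistentConvexBicombing L σ') :
    ∀ x y : X, ∀ t ∈ Icc (0:ℝ) 1, σ' y x t = σ' x y (1 - t) :=
  reversible_consistent_convex_bicombing_general L hrev σ' h'
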